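/- The Virasoro module V_{0,0} has a unique nontrivial proper submodule, namely the one-dimensional subspace ℂ v_0. -/

import Mathlib

/-! Every `d_n` kills `v_0`, so `ℂ v_0` is a submodule. Conversely, `d_0` acts diagonally on the
`v_k` with pairwise distinct eigenvalues `k`, so every submodule `U` contains the homogeneous
components of its elements. If one of them is `c v_m` with `m ≠ 0` and `c ≠ 0`, then
`d_{n-m} v_m = m v_n` puts every `v_n` in `U`; otherwise `U ⊆ ℂ v_0`. -/

open Finsupp TensorProduct

noncomputable section

/-- The underlying space of the Virasoro algebra: coordinates on the basis
`{d_n : n ∈ ℤ}` together with the coefficient of the central element `C`. -/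
abbrev VirCarrier : Type := (ℤ →₀ ℂ) × ℂ

/-- The basis element `d_n`. -/
def dGen (n : ℤ) : VirCarrier := (Finsupp.single n 1, 0)

/-- The central element `C`. -/
def cGen : VirCarrier := (0, 1)

/-- `[d_m, d_n] = (n-m) d_{m+n} + δ_{m,-n} ((m³-m)/12) C`. -/
def dBracket (m n : ℤ) : VirCarrier :=
  (Finsupp.single (m + n) ((n : ℂ) - (m : ℂ)), if m = -n then ((m : ℂ) ^ 3 - (m : ℂ)) / 12 else 0)

/-- The bilinear extension of the bracket on basis elements; the central element `C`
brackets to zero with everything (`[d_n, C] = 0`). -/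
def virBracket (x y : VirCarrier) : VirCarrier :=
  x.1.sum fun m a => y.1.sum fun n b => (a * b) • dBracket m n

/-- Action of `d_n` on `V_{α,β}`: `d_n · v_k = (α + k + nβ) v_{k+n}`, where `v_k` is the
basis element `Finsupp.single k 1`. -/
def dAct (α β : ℂ) (n : ℤ) : Module.End ℂ (ℤ →₀ ℂ) :=
  Finsupp.lsum ℂ fun k => (α + (k : ℂ) + (n : ℂ) * β) • Finsupp.lsingle (k + n)

/-- The action of the Virasoro algebra on the intermediate series module `V_{α,β}`;
`C` acts by zero. -/
def vabAction (α β : ℂ) : VirCarrier →ₗ[ℂ] Module.End ℂ (ℤ →₀ ℂ) :=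
  (Finsupp.lsum ℂ fun n =>
    LinearMap.toSpanSingleton ℂ (Module.End ℂ (ℤ →₀ ℂ)) (dAct α β n)).comp
    (LinearMap.fst ℂ (ℤ →₀ ℂ) ℂ)

/-- A subspace invariant under an action. -/
def ActInvariant {L V : Type*} [AddCommGroup V] [Module ℂ V]
    (act : L → Module.End ℂ V) (U : Submodule ℂ V) : Prop :=
  ∀ x : L, ∀ v ∈ U, act x v ∈ U

/-- Irreducibility: the only invariant subspaces are `⊥` and `⊤`. -/
def ActIrreducible {L V : Type*} [AddCommGroup V] [Module ℂ V]
    (act : L → Module.End ℂ V) : Prop :=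
  ∀ U : Submodule ℂ V, ActInvariant act U → U = ⊥ ∨ U = ⊤

/-- The set `S` generates the module: any invariant subspace containing `S` is everything. -/
def ActGenerates {L V : Type*} [AddCommGroup V] [Module ℂ V]
    (act : L → Module.End ℂ V) (S : Set V) : Prop :=
  ∀ U : Submodule ℂ V, ActInvariant act U → S ⊆ U → U = ⊤

namespace Submodule

variable {K V ι : Type*} [Field K] [AddCommGroup V] [Module K V]

/-- Applying `f - μ a` kills the `a`-component and rescales the others, so induction on `s`. -/
theorem mem_of_sum_eigenvectors_mem {f : Module.End K V} {p : Submodule K V}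
    (hp : ∀ x ∈ p, f x ∈ p) {μ : ι → K} {y : ι → V} (hy : ∀ i, f (y i) = μ i • y i)
    (s : Finset ι) (hμ : Set.InjOn μ s) (hs : ∑ i ∈ s, y i ∈ p) : ∀ i ∈ s, y i ∈ p := by
  classical
  induction s using Finset.induction_on generalizing y with
  | empty => simp
  | insert a s has ih =>
    rw [Finset.sum_insert has] at hs
    have hfs : (f - μ a • 1) (y a + ∑ i ∈ s, y i) = ∑ i ∈ s, (μ i - μ a) • y i := by
      simp [hy, Finset.smul_sum, sub_smul]
    have hscaled := ih (y := fun i => (μ i - μ a) • y i) (fun i => by simp [hy, smul_comm (μ i)])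
      (hμ.mono (by simp)) (hfs ▸ p.sub_mem (hp _ hs) (p.smul_mem _ hs))
    have hs_mem : ∀ i ∈ s, y i ∈ p := fun i hi => by
      have hne : μ i - μ a ≠ 0 := sub_ne_zero.mpr fun h =>
        has (hμ (by simp [hi]) (by simp) h ▸ hi)
      simpa [smul_smul, inv_mul_cancel₀ hne] using p.smul_mem (μ i - μ a)⁻¹ (hscaled i hi)
    have ha : y a ∈ p := by
      simpa using p.sub_mem hs (p.sum_mem hs_mem)
    simpa [ha] using hs_mem

end Submodule

section IntermediateSeries

variable (α β : ℂ)

theorem dAct_single (n k : ℤ) (c : ℂ) :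
    dAct α β n (Finsupp.single k c) = (α + k + n * β) • Finsupp.single (k + n) c := by
  simp [dAct]

theorem vabAction_dGen (n : ℤ) : vabAction α β (dGen n) = dAct α β n := by
  simp [vabAction, dGen]

theorem vabAction_apply (x : VirCarrier) :
    vabAction α β x = x.1.sum fun n a => a • dAct α β n := by
  simp only [vabAction, LinearMap.comp_apply, LinearMap.fst_apply, Finsupp.lsum_apply]
  rfl

variable {α β}

theorem single_apply_mem_of_actInvariant {U : Submodule ℂ (ℤ →₀ ℂ)}
    (hU : ActInvariant (fun x => vabAction α β x) U) {u : ℤ →₀ ℂ} (hu : u ∈ U) (k : ℤ) :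
    Finsupp.single k (u k) ∈ U := by
  by_cases hk : k ∈ u.support
  · refine Submodule.mem_of_sum_eigenvectors_mem (f := dAct α β 0) (μ := fun j : ℤ => α + j)
      (y := fun j => Finsupp.single j (u j)) (fun v hv => vabAction_dGen α β 0 ▸ hU _ v hv)
      (fun j => by simp [dAct_single]) u.support (fun i _ j _ h => by simpa using h) ?_ k hk
    exact (congrArg (· ∈ U) (Finsupp.sum_single u)).mpr hu
  · simp [Finsupp.notMem_support_iff.mp hk]

end IntermediateSeries

theorem vabAction_zero_zero_single_zero (x : VirCarrier) (c : ℂ) :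
    vabAction 0 0 x (Finsupp.single 0 c) = 0 := by
  simp [vabAction_apply, Finsupp.sum, dAct_single]

theorem eq_top_of_single_mem_of_actInvariant {U : Submodule ℂ (ℤ →₀ ℂ)}
    (hU : ActInvariant (fun x => vabAction 0 0 x) U) {m : ℤ} (hm : m ≠ 0) {c : ℂ} (hc : c ≠ 0)
    (hmem : Finsupp.single m c ∈ U) : U = ⊤ := by
  have hbasis : ∀ n : ℤ, Finsupp.single n (1 : ℂ) ∈ U := fun n => by
    have hmc : (m : ℂ) * c ≠ 0 := mul_ne_zero (Int.cast_ne_zero.mpr hm) hc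
    have hd : vabAction 0 0 (dGen (n - m)) (Finsupp.single m c) ∈ U := hU _ _ hmem
    have := U.smul_mem ((m : ℂ) * c)⁻¹ hd
    rwa [vabAction_dGen, dAct_single, Finsupp.smul_single, Finsupp.smul_single, add_sub_cancel,
      zero_add, mul_zero, add_zero, smul_eq_mul, smul_eq_mul, inv_mul_cancel₀ hmc] at this
  rw [eq_top_iff, ← Finsupp.basisSingleOne.span_eq, Submodule.span_le]
  rintro _ ⟨n, rfl⟩
  simpa using hbasis n

theorem le_span_single_zero_of_actInvariant {U : Submodule ℂ (ℤ →₀ ℂ)}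
    (hU : ActInvariant (fun x => vabAction 0 0 x) U) (htop : U ≠ ⊤) :
    U ≤ Submodule.span ℂ {Finsupp.single (0 : ℤ) (1 : ℂ)} := fun u hu => by
  have hsupp : u.support ⊆ {0} := fun k hk => by
    by_contra hk0
    exact htop (eq_top_of_single_mem_of_actInvariant hU (by simpa using hk0)
      (Finsupp.mem_support_iff.mp hk) (single_apply_mem_of_actInvariant hU hu k))
  rw [Finsupp.support_subset_singleton.mp hsupp, Submodule.mem_span_singleton]
  exact ⟨u 0, by simp⟩

/-- `V_{0,0}` has a unique nontrivial proper submodule, namely `ℂ v_0`. -/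
theorem v00_unique_submodule :
    ActInvariant (fun x => vabAction 0 0 x)
        (Submodule.span ℂ {Finsupp.single (0 : ℤ) (1 : ℂ)}) ∧
    Submodule.span ℂ {Finsupp.single (0 : ℤ) (1 : ℂ)} ≠ ⊥ ∧
    Submodule.span ℂ {Finsupp.single (0 : ℤ) (1 : ℂ)} ≠ ⊤ ∧
    (∀ U : Submodule ℂ (ℤ →₀ ℂ), ActInvariant (fun x => vabAction 0 0 x) U →
      U ≠ ⊥ → U ≠ ⊤ → U = Submodule.span ℂ {Finsupp.single (0 : ℤ) (1 : ℂ)}) := by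
  refine ⟨?_, by simp, ?_, ?_⟩
  · intro x v hv
    obtain ⟨c, rfl⟩ := Submodule.mem_span_singleton.mp hv
    simp [vabAction_zero_zero_single_zero]
  · intro h
    obtain ⟨c, hc⟩ := Submodule.mem_span_singleton.mp (h ▸ Submodule.mem_top :
      Finsupp.single (1 : ℤ) (1 : ℂ) ∈ Submodule.span ℂ {Finsupp.single (0 : ℤ) (1 : ℂ)})
    simpa using congr($hc 1)
  · intro U hU hbot htop
    refine le_antisymm (le_span_single_zero_of_actInvariant hU htop) ?_
    obtain ⟨u, hu, hu0⟩ := (Submodule.ne_bot_iff U).mp hbot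
    obtain ⟨c, rfl⟩ := Submodule.mem_span_singleton.mp
      (le_span_single_zero_of_actInvariant hU htop hu)
    have hc : c ≠ 0 := by rintro rfl; simp at hu0
    rw [Submodule.span_le, Set.singleton_subset_iff]
    simpa [smul_smul, hc] using U.smul_mem c⁻¹ hu
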